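/- arXiv:1410.6641 — 4 statements merged into one kernel-verified Lean document; each statement's English description precedes it below -/
import Mathlib

section
/- Let A ⊆ V and x⁰ ∈ X_A. Define the augmented energy Ê_{A,x⁰}(x) = E_A(x) + Σ_{uv ∈ ∂E_A, u ∈ ∂V_A} θ̂_{uv,x⁰_u}(x_u), where E_A is the energy restricted to potentials supported in A and θ̂ is the boundary potential (taking the max over the outside neighbor's labels when x_u agrees with x⁰_u and the min otherwise). If x⁰ minimizes Ê_{A,x⁰} over X_A, then x⁰ is persistent: there exists a global minimizer x* of the full energy E over X_V with x*|_A = x⁰. -/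
open Finset

section
variable {V : Type} [Fintype V] [DecidableEq V]
variable {X : V → Type} [∀ v, Fintype (X v)] [∀ v, DecidableEq (X v)] [∀ v, Nonempty (X v)]

/-- Energy of a pairwise graphical model. -/
noncomputable def energy (Ed : Finset (V × V)) (θ1 : ∀ v, X v → ℝ)
    (θ2 : ∀ u v : V, X u → X v → ℝ) (x : ∀ v, X v) : ℝ :=
  ∑ v, θ1 v (x v) + ∑ e ∈ Ed, θ2 e.1 e.2 (x e.1) (x e.2)

/-- Concatenation of a labeling `x0` on `A` with `x` on the complement. -/
def patch (A : Finset V) (x0 x : ∀ v, X v) : ∀ v, X v :=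
  fun v => if v ∈ A then x0 v else x v

/-- Boundary potential for a boundary edge `(u,v)` with `u` inside. -/
noncomputable def bpot (θ2 : ∀ u v : V, X u → X v → ℝ) (u v : V)
    (yu : X u) (xu : X u) : ℝ :=
  if xu = yu then univ.sup' univ_nonempty (fun z => θ2 u v xu z)
  else univ.inf' univ_nonempty (fun z => θ2 u v xu z)

/-- Boundary potential for a boundary edge `(u,v)` with `v` inside. -/
noncomputable def bpot' (θ2 : ∀ u v : V, X u → X v → ℝ) (u v : V)
    (yv : X v) (xv : X v) : ℝ :=
  if xv = yv then univ.sup' univ_nonempty (fun z => θ2 u v z xv)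
  else univ.inf' univ_nonempty (fun z => θ2 u v z xv)

/-- Augmented ("boundary") energy `Ê_{A,y}` with test labeling `y`. -/
noncomputable def augEnergy (Ed : Finset (V × V)) (θ1 : ∀ v, X v → ℝ)
    (θ2 : ∀ u v : V, X u → X v → ℝ) (A : Finset V) (y x : ∀ v, X v) : ℝ :=
  (∑ v ∈ A, θ1 v (x v)
    + ∑ e ∈ Ed.filter (fun e => e.1 ∈ A ∧ e.2 ∈ A), θ2 e.1 e.2 (x e.1) (x e.2))
  + ∑ e ∈ Ed.filter (fun e => e.1 ∈ A ∧ e.2 ∉ A), bpot θ2 e.1 e.2 (y e.1) (x e.1)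
  + ∑ e ∈ Ed.filter (fun e => e.1 ∉ A ∧ e.2 ∈ A), bpot' θ2 e.1 e.2 (y e.2) (x e.2)

set_option linter.unusedSectionVars false

lemma bpot_key (θ2 : ∀ u v : V, X u → X v → ℝ) (u v : V) (yu xu : X u) (zv : X v) :
    θ2 u v yu zv + bpot θ2 u v yu xu ≤ θ2 u v xu zv + bpot θ2 u v yu yu := by
  unfold bpot
  by_cases hx : xu = yu
  · subst hx; simp
  · rw [if_neg hx, if_pos rfl]
    have h1 : θ2 u v yu zv ≤ univ.sup' univ_nonempty (fun z => θ2 u v yu z) :=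
      le_sup' _ (mem_univ zv)
    have h2 : univ.inf' univ_nonempty (fun z => θ2 u v xu z) ≤ θ2 u v xu zv :=
      inf'_le _ (mem_univ zv)
    linarith

lemma bpot'_key (θ2 : ∀ u v : V, X u → X v → ℝ) (u v : V) (yv xv : X v) (zu : X u) :
    θ2 u v zu yv + bpot' θ2 u v yv xv ≤ θ2 u v zu xv + bpot' θ2 u v yv yv := by
  unfold bpot'
  by_cases hx : xv = yv
  · subst hx; simp
  · rw [if_neg hx, if_pos rfl]
    have h1 : θ2 u v zu yv ≤ univ.sup' univ_nonempty (fun z => θ2 u v z yv) :=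
      le_sup' (fun z => θ2 u v z yv) (mem_univ zu)
    have h2 : univ.inf' univ_nonempty (fun z => θ2 u v z xv) ≤ θ2 u v zu xv :=
      inf'_le (fun z => θ2 u v z xv) (mem_univ zu)
    linarith

lemma edge_split (Ed : Finset (V × V)) (A : Finset V) (f : V × V → ℝ) :
    ∑ e ∈ Ed, f e =
      ∑ e ∈ Ed.filter (fun e => e.1 ∈ A ∧ e.2 ∈ A), f e
    + ∑ e ∈ Ed.filter (fun e => e.1 ∈ A ∧ e.2 ∉ A), f e
    + ∑ e ∈ Ed.filter (fun e => e.1 ∉ A ∧ e.2 ∈ A), f e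
    + ∑ e ∈ Ed.filter (fun e => e.1 ∉ A ∧ e.2 ∉ A), f e := by
  rw [← Finset.sum_filter_add_sum_filter_not Ed (fun e => e.1 ∈ A) f,
    ← Finset.sum_filter_add_sum_filter_not (Ed.filter (fun e => e.1 ∈ A)) (fun e => e.2 ∈ A) f,
    ← Finset.sum_filter_add_sum_filter_not (Ed.filter (fun e => ¬ e.1 ∈ A)) (fun e => e.2 ∈ A) f,
    Finset.filter_filter, Finset.filter_filter, Finset.filter_filter, Finset.filter_filter]
  ring

lemma key_ineq (Ed : Finset (V × V)) (θ1 : ∀ v, X v → ℝ) (θ2 : ∀ u v : V, X u → X v → ℝ)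
    (A : Finset V) (x0 y : ∀ v, X v) :
    energy Ed θ1 θ2 (patch A x0 y) + augEnergy Ed θ1 θ2 A x0 y
      ≤ energy Ed θ1 θ2 y + augEnergy Ed θ1 θ2 A x0 x0 := by
  have hu : ∀ g : ∀ v, X v, ∑ v, θ1 v (g v)
      = ∑ v ∈ A, θ1 v (g v) + ∑ v ∈ univ.filter (fun v => v ∉ A), θ1 v (g v) := by
    intro g
    rw [← Finset.sum_filter_add_sum_filter_not univ (fun v => v ∈ A)]
    congr 1
    apply Finset.sum_congr _ (fun _ _ => rfl)
    simp
  -- rewrite patch sums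
  have hpu : ∑ v ∈ A, θ1 v (patch A x0 y v) = ∑ v ∈ A, θ1 v (x0 v) :=
    Finset.sum_congr rfl (fun v hv => by simp [patch, hv])
  have hpu' : ∑ v ∈ univ.filter (fun v => v ∉ A), θ1 v (patch A x0 y v)
      = ∑ v ∈ univ.filter (fun v => v ∉ A), θ1 v (y v) :=
    Finset.sum_congr rfl (fun v hv => by
      simp only [mem_filter] at hv; simp [patch, hv.2])
  have hp11 : ∑ e ∈ Ed.filter (fun e => e.1 ∈ A ∧ e.2 ∈ A),
      θ2 e.1 e.2 (patch A x0 y e.1) (patch A x0 y e.2)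
      = ∑ e ∈ Ed.filter (fun e => e.1 ∈ A ∧ e.2 ∈ A), θ2 e.1 e.2 (x0 e.1) (x0 e.2) :=
    Finset.sum_congr rfl (fun e he => by
      simp only [mem_filter] at he; simp [patch, he.2.1, he.2.2])
  have hp10 : ∑ e ∈ Ed.filter (fun e => e.1 ∈ A ∧ e.2 ∉ A),
      θ2 e.1 e.2 (patch A x0 y e.1) (patch A x0 y e.2)
      = ∑ e ∈ Ed.filter (fun e => e.1 ∈ A ∧ e.2 ∉ A), θ2 e.1 e.2 (x0 e.1) (y e.2) :=
    Finset.sum_congr rfl (fun e he => by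
      simp only [mem_filter] at he; simp [patch, he.2.1, he.2.2])
  have hp01 : ∑ e ∈ Ed.filter (fun e => e.1 ∉ A ∧ e.2 ∈ A),
      θ2 e.1 e.2 (patch A x0 y e.1) (patch A x0 y e.2)
      = ∑ e ∈ Ed.filter (fun e => e.1 ∉ A ∧ e.2 ∈ A), θ2 e.1 e.2 (y e.1) (x0 e.2) :=
    Finset.sum_congr rfl (fun e he => by
      simp only [mem_filter] at he; simp [patch, he.2.1, he.2.2])
  have hp00 : ∑ e ∈ Ed.filter (fun e => e.1 ∉ A ∧ e.2 ∉ A),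
      θ2 e.1 e.2 (patch A x0 y e.1) (patch A x0 y e.2)
      = ∑ e ∈ Ed.filter (fun e => e.1 ∉ A ∧ e.2 ∉ A), θ2 e.1 e.2 (y e.1) (y e.2) :=
    Finset.sum_congr rfl (fun e he => by
      simp only [mem_filter] at he; simp [patch, he.2.1, he.2.2])
  have hin : ∑ e ∈ Ed.filter (fun e => e.1 ∈ A ∧ e.2 ∉ A),
        (θ2 e.1 e.2 (x0 e.1) (y e.2) + bpot θ2 e.1 e.2 (x0 e.1) (y e.1))
      ≤ ∑ e ∈ Ed.filter (fun e => e.1 ∈ A ∧ e.2 ∉ A),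
        (θ2 e.1 e.2 (y e.1) (y e.2) + bpot θ2 e.1 e.2 (x0 e.1) (x0 e.1)) :=
    Finset.sum_le_sum (fun e _ => bpot_key θ2 e.1 e.2 (x0 e.1) (y e.1) (y e.2))
  have hout : ∑ e ∈ Ed.filter (fun e => e.1 ∉ A ∧ e.2 ∈ A),
        (θ2 e.1 e.2 (y e.1) (x0 e.2) + bpot' θ2 e.1 e.2 (x0 e.2) (y e.2))
      ≤ ∑ e ∈ Ed.filter (fun e => e.1 ∉ A ∧ e.2 ∈ A),
        (θ2 e.1 e.2 (y e.1) (y e.2) + bpot' θ2 e.1 e.2 (x0 e.2) (x0 e.2)) :=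
    Finset.sum_le_sum (fun e _ => bpot'_key θ2 e.1 e.2 (x0 e.2) (y e.2) (y e.1))
  rw [Finset.sum_add_distrib, Finset.sum_add_distrib] at hin
  rw [Finset.sum_add_distrib, Finset.sum_add_distrib] at hout
  unfold energy augEnergy
  rw [hu (patch A x0 y), hu y,
    edge_split Ed A (fun e => θ2 e.1 e.2 (patch A x0 y e.1) (patch A x0 y e.2)),
    edge_split Ed A (fun e => θ2 e.1 e.2 (y e.1) (y e.2)),
    hpu, hpu', hp11, hp10, hp01, hp00]
  linarith

/-- Theorem "PersistencyCriterion": if `x0` minimizes the augmented energy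
`Ê_{A,x0}` over labelings of `A`, then `x0` is persistent. -/
theorem persistency_criterion
    (Ed : Finset (V × V)) (θ1 : ∀ v, X v → ℝ) (θ2 : ∀ u v : V, X u → X v → ℝ)
    (A : Finset V) (x0 : ∀ v, X v)
    (h : ∀ x : ∀ v, X v,
      augEnergy Ed θ1 θ2 A x0 x0 ≤ augEnergy Ed θ1 θ2 A x0 x) :
    ∃ xs : ∀ v, X v, (∀ y, energy Ed θ1 θ2 xs ≤ energy Ed θ1 θ2 y) ∧
      ∀ v ∈ A, xs v = x0 v := by
  obtain ⟨y, hy⟩ := Finite.exists_min (energy Ed θ1 θ2)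
  refine ⟨patch A x0 y, fun z => ?_, fun v hv => by simp [patch, hv]⟩
  have hk := key_ineq Ed θ1 θ2 A x0 y
  linarith [h y, hy z, hy (patch A x0 y)]


end
end

section
/- For a fixed node u with neighbor v, fixed label y_u ∈ X_u, and any reparametrization function φ : X_v → ℝ, define θ^φ_{uv}(x_u,x_v) = θ_{uv}(x_u,x_v) + φ(x_v) (the part of reparametrization relevant to edge uv). Then for every x_u ≠ y_u, min_{x_v} θ^φ_{uv}(x_u,x_v) − max_{x_v} θ^φ_{uv}(y_u,x_v) ≤ min_{x_v} (θ_{uv}(x_u,x_v) − θ_{uv}(y_u,x_v)), and equality holds for the choice φ(x_v) = −θ_{uv}(y_u,x_v). -/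
open Finset

/-- Reparametrization bound: for any reparametrization `φ` the boundary gap
`min_z θ^φ(x_u,z) − max_z θ^φ(y_u,z)` is at most the reparametrization-independent
bound `min_z (θ(x_u,z) − θ(y_u,z))`, with equality for `φ = −θ(y_u,·)`. -/
theorem reparametrization_bound {Xu Xv : Type} [Fintype Xu] [Fintype Xv] [Nonempty Xv]
    (θ : Xu → Xv → ℝ) (yu : Xu) (φ : Xv → ℝ) (xu : Xu) (h : xu ≠ yu) :
    (univ.inf' univ_nonempty (fun z => θ xu z + φ z)
      - univ.sup' univ_nonempty (fun z => θ yu z + φ z)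
      ≤ univ.inf' univ_nonempty (fun z => θ xu z - θ yu z)) ∧
    (univ.inf' univ_nonempty (fun z => θ xu z + (-θ yu z))
      - univ.sup' univ_nonempty (fun z => θ yu z + (-θ yu z))
      = univ.inf' univ_nonempty (fun z => θ xu z - θ yu z)) := by
  constructor
  · apply le_inf'
    intro z hz
    have h1 : univ.inf' univ_nonempty (fun z => θ xu z + φ z) ≤ θ xu z + φ z :=
      inf'_le _ hz
    have h2 : θ yu z + φ z ≤ univ.sup' univ_nonempty (fun z => θ yu z + φ z) :=
      le_sup' (fun z => θ yu z + φ z) hz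
    linarith
  · have h0 : univ.sup' univ_nonempty (fun z => θ yu z + (-θ yu z)) = 0 := by
      simp
    have h1 : (fun z => θ xu z + (-θ yu z)) = fun z => θ xu z - θ yu z := by
      funext z; ring
    rw [h0, sub_zero, h1]
end

section
/- Suppose x⁰ ∈ X_A minimizes the augmented energy Ê_{A,x⁰} over X_A. Then the 'patching' map on X_V defined by x ↦ x′ where x′_v = x⁰_v for v ∈ A and x′_v = x_v for v ∉ A satisfies E(x′) ≤ E(x) for every x ∈ X_V; i.e. this all-to-one map is an improving mapping for E. -/
open Finset

section
variable {V : Type} [Fintype V] [DecidableEq V]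
variable {X : V → Type} [∀ v, Fintype (X v)] [∀ v, DecidableEq (X v)] [∀ v, Nonempty (X v)]

/-- Termwise key inequality for boundary edges with the first endpoint inside. -/
lemma key_bpot (θ2 : ∀ u v : V, X u → X v → ℝ) (u v : V)
    (x0u xu : X u) (xv : X v) :
    θ2 u v x0u xv + bpot θ2 u v x0u xu ≤ θ2 u v xu xv + bpot θ2 u v x0u x0u := by
  unfold bpot
  rw [if_pos rfl]
  by_cases hc : xu = x0u
  · subst hc
    rw [if_pos rfl]
  · rw [if_neg hc]
    have h1 : θ2 u v x0u xv ≤ univ.sup' univ_nonempty (fun z => θ2 u v x0u z) :=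
      le_sup' _ (mem_univ xv)
    have h2 : univ.inf' univ_nonempty (fun z => θ2 u v xu z) ≤ θ2 u v xu xv :=
      inf'_le _ (mem_univ xv)
    linarith

/-- Termwise key inequality for boundary edges with the second endpoint inside. -/
lemma key_bpot' (θ2 : ∀ u v : V, X u → X v → ℝ) (u v : V)
    (x0v xv : X v) (xu : X u) :
    θ2 u v xu x0v + bpot' θ2 u v x0v xv ≤ θ2 u v xu xv + bpot' θ2 u v x0v x0v := by
  unfold bpot'
  rw [if_pos rfl]
  by_cases hc : xv = x0v
  · subst hc
    rw [if_pos rfl]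
  · rw [if_neg hc]
    have h1 : θ2 u v xu x0v ≤ univ.sup' univ_nonempty (fun z => θ2 u v z x0v) :=
      le_sup' (fun z => θ2 u v z x0v) (mem_univ xu)
    have h2 : univ.inf' univ_nonempty (fun z => θ2 u v z xv) ≤ θ2 u v xu xv :=
      inf'_le (fun z => θ2 u v z xv) (mem_univ xu)
    linarith

/-- Decomposition of the energy along a subset of nodes. -/
lemma energy_decomp (Ed : Finset (V × V)) (θ1 : ∀ v, X v → ℝ)
    (θ2 : ∀ u v : V, X u → X v → ℝ) (A : Finset V) (z : ∀ v, X v) :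
    energy Ed θ1 θ2 z =
      (∑ v ∈ A, θ1 v (z v) + ∑ v ∈ Aᶜ, θ1 v (z v))
      + ((∑ e ∈ Ed.filter (fun e => e.1 ∈ A ∧ e.2 ∈ A), θ2 e.1 e.2 (z e.1) (z e.2)
        + ∑ e ∈ Ed.filter (fun e => e.1 ∈ A ∧ e.2 ∉ A), θ2 e.1 e.2 (z e.1) (z e.2))
        + (∑ e ∈ Ed.filter (fun e => e.1 ∉ A ∧ e.2 ∈ A), θ2 e.1 e.2 (z e.1) (z e.2)
        + ∑ e ∈ Ed.filter (fun e => e.1 ∉ A ∧ e.2 ∉ A), θ2 e.1 e.2 (z e.1) (z e.2))) := by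
  unfold energy
  congr 1
  · exact (Finset.sum_add_sum_compl A _).symm
  · rw [← Finset.sum_filter_add_sum_filter_not Ed (fun e => e.1 ∈ A)]
    congr 1
    · rw [← Finset.sum_filter_add_sum_filter_not (Ed.filter (fun e => e.1 ∈ A))
        (fun e => e.2 ∈ A), Finset.filter_filter, Finset.filter_filter]
    · rw [← Finset.sum_filter_add_sum_filter_not (Ed.filter (fun e => ¬ e.1 ∈ A))
        (fun e => e.2 ∈ A), Finset.filter_filter, Finset.filter_filter]

/-- If `x0` minimizes the augmented energy `Ê_{A,x0}`, then patching any labeling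
by `x0` on `A` does not increase the energy: the all-to-one map is improving. -/
theorem patching_is_improving
    (Ed : Finset (V × V)) (θ1 : ∀ v, X v → ℝ) (θ2 : ∀ u v : V, X u → X v → ℝ)
    (A : Finset V) (x0 : ∀ v, X v)
    (h : ∀ x : ∀ v, X v,
      augEnergy Ed θ1 θ2 A x0 x0 ≤ augEnergy Ed θ1 θ2 A x0 x) :
    ∀ x : ∀ v, X v, energy Ed θ1 θ2 (patch A x0 x) ≤ energy Ed θ1 θ2 x := by
  intro x
  have hx := h x
  set P : ∀ v, X v := patch A x0 x with hPdef
  -- values of P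
  have hPA : ∀ v, v ∈ A → P v = x0 v := fun v hv => if_pos hv
  have hPc : ∀ v, v ∉ A → P v = x v := fun v hv => if_neg hv
  rw [energy_decomp Ed θ1 θ2 A P, energy_decomp Ed θ1 θ2 A x]
  unfold augEnergy at hx
  -- reworg sums over P into sums in x0 / x
  have e1 : ∑ v ∈ A, θ1 v (P v) = ∑ v ∈ A, θ1 v (x0 v) :=
    Finset.sum_congr rfl (fun v hv => by rw [hPA v hv])
  have e2 : ∑ v ∈ Aᶜ, θ1 v (P v) = ∑ v ∈ Aᶜ, θ1 v (x v) :=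
    Finset.sum_congr rfl (fun v hv => by rw [hPc v (Finset.mem_compl.mp hv)])
  have e3 : ∑ e ∈ Ed.filter (fun e => e.1 ∈ A ∧ e.2 ∈ A), θ2 e.1 e.2 (P e.1) (P e.2)
      = ∑ e ∈ Ed.filter (fun e => e.1 ∈ A ∧ e.2 ∈ A), θ2 e.1 e.2 (x0 e.1) (x0 e.2) := by
    refine Finset.sum_congr rfl (fun e he => ?_)
    obtain ⟨h1, h2⟩ := (Finset.mem_filter.mp he).2
    rw [hPA _ h1, hPA _ h2]
  have e4 : ∑ e ∈ Ed.filter (fun e => e.1 ∈ A ∧ e.2 ∉ A), θ2 e.1 e.2 (P e.1) (P e.2)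
      = ∑ e ∈ Ed.filter (fun e => e.1 ∈ A ∧ e.2 ∉ A), θ2 e.1 e.2 (x0 e.1) (x e.2) := by
    refine Finset.sum_congr rfl (fun e he => ?_)
    obtain ⟨h1, h2⟩ := (Finset.mem_filter.mp he).2
    rw [hPA _ h1, hPc _ h2]
  have e5 : ∑ e ∈ Ed.filter (fun e => e.1 ∉ A ∧ e.2 ∈ A), θ2 e.1 e.2 (P e.1) (P e.2)
      = ∑ e ∈ Ed.filter (fun e => e.1 ∉ A ∧ e.2 ∈ A), θ2 e.1 e.2 (x e.1) (x0 e.2) := by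
    refine Finset.sum_congr rfl (fun e he => ?_)
    obtain ⟨h1, h2⟩ := (Finset.mem_filter.mp he).2
    rw [hPc _ h1, hPA _ h2]
  have e6 : ∑ e ∈ Ed.filter (fun e => e.1 ∉ A ∧ e.2 ∉ A), θ2 e.1 e.2 (P e.1) (P e.2)
      = ∑ e ∈ Ed.filter (fun e => e.1 ∉ A ∧ e.2 ∉ A), θ2 e.1 e.2 (x e.1) (x e.2) := by
    refine Finset.sum_congr rfl (fun e he => ?_)
    obtain ⟨h1, h2⟩ := (Finset.mem_filter.mp he).2
    rw [hPc _ h1, hPc _ h2]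
  rw [e1, e2, e3, e4, e5, e6]
  -- key sum inequalities on the boundary
  have k1 : ∑ e ∈ Ed.filter (fun e => e.1 ∈ A ∧ e.2 ∉ A),
        (θ2 e.1 e.2 (x0 e.1) (x e.2) + bpot θ2 e.1 e.2 (x0 e.1) (x e.1))
      ≤ ∑ e ∈ Ed.filter (fun e => e.1 ∈ A ∧ e.2 ∉ A),
        (θ2 e.1 e.2 (x e.1) (x e.2) + bpot θ2 e.1 e.2 (x0 e.1) (x0 e.1)) :=
    Finset.sum_le_sum (fun e _ => key_bpot θ2 e.1 e.2 (x0 e.1) (x e.1) (x e.2))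
  have k2 : ∑ e ∈ Ed.filter (fun e => e.1 ∉ A ∧ e.2 ∈ A),
        (θ2 e.1 e.2 (x e.1) (x0 e.2) + bpot' θ2 e.1 e.2 (x0 e.2) (x e.2))
      ≤ ∑ e ∈ Ed.filter (fun e => e.1 ∉ A ∧ e.2 ∈ A),
        (θ2 e.1 e.2 (x e.1) (x e.2) + bpot' θ2 e.1 e.2 (x0 e.2) (x0 e.2)) :=
    Finset.sum_le_sum (fun e _ => key_bpot' θ2 e.1 e.2 (x0 e.2) (x e.2) (x e.1))
  rw [Finset.sum_add_distrib, Finset.sum_add_distrib] at k1 k2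
  linarith
end
end

section
/- (Higher-order persistency criterion.) Let G = (V, E) be a hypergraph with E a set of subsets of V, energy E(x) = Σ_{e∈E} θ_e(x|_e), and A ⊆ V with boundary edges ∂E_A = {e ∈ E : e ∩ A ≠ ∅ and e ∩ (V∖A) ≠ ∅}. For a test labeling x⁰ ∈ X_A define for e ∈ ∂E_A the boundary potential θ̂_{e,x⁰}(x) = max over x̃ ∈ X_e with x̃|_{A∩e} = x|_{A∩e} of θ_e(x̃) if x|_{A∩e} = x⁰|_{A∩e}, and the corresponding min otherwise. If x⁰ minimizes over X_A the augmented energy E_A(x) + Σ_{e∈∂E_A} θ̂_{e,x⁰}(x), where E_A sums θ_e over hyperedges e ⊆ A, then there is a global minimizer of E agreeing with x⁰ on A. -/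
open Finset

section
variable {V : Type} [Fintype V] [DecidableEq V]
variable {X : V → Type} [∀ v, Fintype (X v)] [∀ v, DecidableEq (X v)] [∀ v, Nonempty (X v)]

/-- Higher-order boundary potential: extremize `θe` over labelings agreeing with
`x` on `S` (= `e ∩ A`), taking max if `x` agrees with the test labeling `x0` on `S`
and min otherwise. -/
noncomputable def hbpot (θe : (∀ v, X v) → ℝ) (S : Finset V) (x0 x : ∀ v, X v) : ℝ :=
  if ∀ v ∈ S, x v = x0 v then
    (univ.filter (fun z : ∀ v, X v => ∀ v ∈ S, z v = x v)).sup' ⟨x, by simp⟩ θe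
  else
    (univ.filter (fun z : ∀ v, X v => ∀ v ∈ S, z v = x v)).inf' ⟨x, by simp⟩ θe

/-- Higher-order persistency criterion: if `x0` minimizes the augmented hypergraph
energy, then there is a global minimizer agreeing with `x0` on `A`. -/
theorem higher_order_persistency_criterion
    (Ed : Finset (Finset V)) (θ : Finset V → (∀ v, X v) → ℝ)
    (hloc : ∀ e ∈ Ed, ∀ x y : ∀ v, X v, (∀ v ∈ e, x v = y v) → θ e x = θ e y)
    (A : Finset V) (x0 : ∀ v, X v)
    (h : ∀ x : ∀ v, X v,
      (∑ e ∈ Ed.filter (fun e => e ⊆ A), θ e x0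
        + ∑ e ∈ Ed.filter (fun e => (e ∩ A).Nonempty ∧ ¬ e ⊆ A),
            hbpot (θ e) (e ∩ A) x0 x0)
      ≤ (∑ e ∈ Ed.filter (fun e => e ⊆ A), θ e x
        + ∑ e ∈ Ed.filter (fun e => (e ∩ A).Nonempty ∧ ¬ e ⊆ A),
            hbpot (θ e) (e ∩ A) x0 x)) :
    ∃ xs : ∀ v, X v, (∀ y, ∑ e ∈ Ed, θ e xs ≤ ∑ e ∈ Ed, θ e y) ∧
      ∀ v ∈ A, xs v = x0 v := by
  classical
  obtain ⟨y, hy⟩ := Finite.exists_min (fun x : ∀ v, X v => ∑ e ∈ Ed, θ e x)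
  set xs : ∀ v, X v := fun v => if v ∈ A then x0 v else y v with hxsdef
  refine ⟨xs, ?_, fun v hv => by simp [hxsdef, hv]⟩
  intro z
  refine le_trans ?_ (hy z)
  set B := Ed.filter (fun e => (e ∩ A).Nonempty ∧ ¬ e ⊆ A) with hB
  set C := Ed.filter (fun e => ¬ (e ∩ A).Nonempty ∧ ¬ e ⊆ A) with hC
  have hsplit : ∀ w : ∀ v, X v, ∑ e ∈ Ed, θ e w
      = ∑ e ∈ Ed.filter (fun e => e ⊆ A), θ e w + (∑ e ∈ B, θ e w + ∑ e ∈ C, θ e w) := by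
    intro w
    rw [← Finset.sum_filter_add_sum_filter_not Ed (fun e => e ⊆ A) (fun e => θ e w)]
    congr 1
    rw [← Finset.sum_filter_add_sum_filter_not (Ed.filter (fun e => ¬ e ⊆ A))
      (fun e => (e ∩ A).Nonempty) (fun e => θ e w)]
    congr 1
    · apply Finset.sum_congr _ (fun _ _ => rfl)
      ext e; simp [hB]; tauto
    · apply Finset.sum_congr _ (fun _ _ => rfl)
      ext e; simp [hC]; tauto
  rw [hsplit xs, hsplit y]
  -- edges inside A
  have hsub : ∀ e ∈ Ed.filter (fun e => e ⊆ A), θ e xs = θ e x0 := by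
    intro e he
    simp only [Finset.mem_filter] at he
    exact hloc e he.1 xs x0 (fun v hv => by simp [hxsdef, he.2 hv])
  -- edges outside A
  have hout : ∀ e ∈ C, θ e xs = θ e y := by
    intro e he
    simp only [hC, Finset.mem_filter, Finset.not_nonempty_iff_eq_empty] at he
    refine hloc e he.1 xs y (fun v hv => ?_)
    have hvA : v ∉ A := fun hA => by
      have : v ∈ e ∩ A := Finset.mem_inter.mpr ⟨hv, hA⟩
      simp [he.2.1] at this
    simp [hxsdef, hvA]
  -- boundary edges: key per-edge inequality
  have hkey : ∀ e ∈ B, θ e xs + hbpot (θ e) (e ∩ A) x0 y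
      ≤ θ e y + hbpot (θ e) (e ∩ A) x0 x0 := by
    intro e he
    simp only [hB, Finset.mem_filter] at he
    by_cases hag : ∀ v ∈ e ∩ A, y v = x0 v
    · have hxy : θ e xs = θ e y := by
        refine hloc e he.1 xs y (fun v hv => ?_)
        by_cases hvA : v ∈ A
        · simp only [hxsdef, if_pos hvA]
          exact (hag v (Finset.mem_inter.mpr ⟨hv, hvA⟩)).symm
        · simp [hxsdef, hvA]
      have hpot : hbpot (θ e) (e ∩ A) x0 y = hbpot (θ e) (e ∩ A) x0 x0 := by
        simp only [hbpot, if_pos hag, implies_true, if_true]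
        have hfe : (univ.filter (fun z : ∀ v, X v => ∀ v ∈ e ∩ A, z v = y v))
            = (univ.filter (fun z : ∀ v, X v => ∀ v ∈ e ∩ A, z v = x0 v)) := by
          apply Finset.filter_congr
          intro z _
          constructor
          · intro hz v hv; rw [hz v hv, hag v hv]
          · intro hz v hv; rw [hz v hv, hag v hv]
        exact Finset.sup'_congr ⟨y, by simp⟩ hfe (fun _ _ => rfl)
      rw [hxy, hpot]
    · have h1 : hbpot (θ e) (e ∩ A) x0 y ≤ θ e y := by
        rw [hbpot, if_neg hag]
        exact Finset.inf'_le _ (by simp)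
      have h2 : θ e xs ≤ hbpot (θ e) (e ∩ A) x0 x0 := by
        rw [hbpot, if_pos (fun v _ => rfl)]
        refine Finset.le_sup' _ ?_
        simp only [Finset.mem_filter, Finset.mem_univ, true_and]
        intro v hv
        simp [hxsdef, (Finset.mem_inter.mp hv).2]
      linarith
  have hsum : ∑ e ∈ B, θ e xs + ∑ e ∈ B, hbpot (θ e) (e ∩ A) x0 y
      ≤ ∑ e ∈ B, θ e y + ∑ e ∈ B, hbpot (θ e) (e ∩ A) x0 x0 := by
    rw [← Finset.sum_add_distrib, ← Finset.sum_add_distrib]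
    exact Finset.sum_le_sum hkey
  have hh := h y
  rw [Finset.sum_congr rfl hsub, Finset.sum_congr rfl hout]
  rw [hB] at hsum
  linarith

end
end
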